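/- arXiv:2012.03381 — 3 statements merged into one kernel-verified Lean document; each statement's English description precedes it below -/
import Mathlib

section
/- Let i be a point of P strictly interior to the convex hull of P, and let U be a convex partition of P. For every other point j of P, there exists an edge {i,k} of the partition with k strictly to the left of or on the oriented line from i through j (i.e., the edges incident to i leave no reflex angle: for each direction, some incident edge lies in the closed left half-plane of the ray from i toward j). -/
open Set

attribute [local instance] Classical.propDecidable

abbrev Pt : Type := ℝ × ℝ

/-- cross(k,l,m) = (l-k) × (m-l), positive iff (k,l,m) is positively oriented. -/
def cross (k l m : Pt) : ℝ :=
  (l.1 - k.1) * (m.2 - l.2) - (l.2 - k.2) * (m.1 - l.1)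

/-- No three distinct points of `P` are collinear. -/
def GenPos (P : Finset Pt) : Prop :=
  ∀ k ∈ P, ∀ l ∈ P, ∀ m ∈ P, k ≠ l → l ≠ m → k ≠ m → cross k l m ≠ 0

/-- The points of `P` on the boundary of the convex hull (extreme points). -/
noncomputable def hullPts (P : Finset Pt) : Finset Pt :=
  P.filter (fun x => x ∈ Set.extremePoints ℝ (convexHull ℝ (P : Set Pt)))

/-- Union of all segments determined by pairs of points of `P`. -/
def arrUnion (P : Finset Pt) : Set Pt :=
  ⋃ a ∈ P, ⋃ b ∈ P, segment ℝ a b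

/-- A bounded face of the arrangement of all segments determined by `P`:
a bounded connected component of the complement of the union of the segments. -/
def IsBoundedFace (P : Finset Pt) (F : Set Pt) : Prop :=
  (∃ x, x ∉ arrUnion P ∧ F = connectedComponentIn (arrUnion P)ᶜ x) ∧
  Bornology.IsBounded F

/-- An empty convex polygon with vertex set `p ⊆ P`: at least 3 vertices, each vertex is
an extreme point of the hull of `p`, and no point of `P` lies in the interior. -/
def IsEmptyPolygon (P p : Finset Pt) : Prop :=
  p ⊆ P ∧ 3 ≤ p.card ∧
  (∀ v ∈ p, v ∈ Set.extremePoints ℝ (convexHull ℝ (p : Set Pt))) ∧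
  ∀ x ∈ P, x ∉ interior (convexHull ℝ (p : Set Pt))

/-- `{a,b}` is an edge of the polygon with vertex set `p`: a segment between two
distinct vertices lying on the boundary of the polygon. -/
def IsEdgeOf (p : Finset Pt) (a b : Pt) : Prop :=
  a ∈ p ∧ b ∈ p ∧ a ≠ b ∧
  segment ℝ a b ⊆ frontier (convexHull ℝ (p : Set Pt))

/-- A convex partition of `P`: a finite set of empty convex polygons with vertices in `P`,
pairwise interior-disjoint, whose union is the convex hull of `P`. -/
def IsConvexPartition (P : Finset Pt) (U : Finset (Finset Pt)) : Prop :=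
  (∀ p ∈ U, IsEmptyPolygon P p) ∧
  (∀ p ∈ U, ∀ q ∈ U, p ≠ q →
    interior (convexHull ℝ (p : Set Pt)) ∩ interior (convexHull ℝ (q : Set Pt)) = ∅) ∧
  (⋃ p ∈ U, convexHull ℝ (p : Set Pt)) = convexHull ℝ (P : Set Pt)

/-! A point of `P` in the hull of other points of `P` is, by Carathéodory, a positive combination
of at most three of them; general position rules out one or two, so it lies inside a triangle.
Hence the non-extreme point `i` is interior to the hull of `P`, and so arbitrarily close to `i`
and strictly left of `i → j` there are points of the hull. As `U` is finite, one polygon `p` has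
such points accumulating at `i`: then `i ∈ conv p`, `i` is a vertex of `p` (an empty polygon has no
point of `P` inside), and `p` has a vertex `v` strictly left of `i → j`. The two edges of `p` at
`i` bound a wedge containing `v`, so they cannot both point strictly right of `i → j`. -/

open Filter Topology

@[simp]
lemma cross_self_left (a b : Pt) : cross a a b = 0 := by
  simp only [cross]; ring

@[simp]
lemma cross_self_right (a b : Pt) : cross a b b = 0 := by
  simp only [cross]; ring

@[simp]
lemma cross_self_outer (a b : Pt) : cross a b a = 0 := by
  simp only [cross]; ring

lemma cross_rotate (a b c : Pt) : cross a b c = cross b c a := by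
  simp only [cross]; ring

lemma cross_combo (a b x y : Pt) {s t : ℝ} (hst : s + t = 1) :
    cross a b (s • x + t • y) = s * cross a b x + t * cross a b y := by
  obtain rfl : s = 1 - t := by linarith
  simp only [cross, Prod.fst_add, Prod.snd_add, Prod.smul_fst, Prod.smul_snd, smul_eq_mul]
  ring

lemma convex_setOf_cross_le (a b : Pt) (c : ℝ) : Convex ℝ {x | cross a b x ≤ c} := by
  intro x hx y hy s t hs ht hst
  simp only [Set.mem_ofPred_eq, cross_combo a b x y hst] at hx hy ⊢
  calc s * cross a b x + t * cross a b y ≤ s * c + t * c := by gcongr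
    _ = c := by rw [← add_mul, hst, one_mul]

lemma cross_le_of_mem_convexHull {s : Set Pt} {a b : Pt} {c : ℝ} (h : ∀ v ∈ s, cross a b v ≤ c)
    {x : Pt} (hx : x ∈ convexHull ℝ s) : cross a b x ≤ c :=
  convexHull_min h (convex_setOf_cross_le a b c) hx

/-- `(a.2 - b.2, b.1 - a.1)` is the left normal of `a → b`. -/
lemma cross_lt_cross_add_smul {a b : Pt} (hab : a ≠ b) (x : Pt) {t : ℝ} (ht : 0 < t) :
    cross a b x < cross a b (x + t • (a.2 - b.2, b.1 - a.1)) := by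
  have hpos : 0 < (b.1 - a.1) ^ 2 + (b.2 - a.2) ^ 2 := by
    by_contra! h
    exact hab (Prod.ext (by nlinarith) (by nlinarith))
  have : cross a b (x + t • (a.2 - b.2, b.1 - a.1)) =
      cross a b x + t * ((b.1 - a.1) ^ 2 + (b.2 - a.2) ^ 2) := by
    simp only [cross, Prod.fst_add, Prod.snd_add, Prod.smul_mk, smul_eq_mul]; ring
  rw [this]
  exact lt_add_of_pos_right _ (mul_pos ht hpos)

lemma frequently_mem_and_cross_lt {a b x : Pt} (hab : a ≠ b) {s : Set Pt} (hs : s ∈ 𝓝 x) :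
    ∃ᶠ y in 𝓝 x, y ∈ s ∧ cross a b x < cross a b y := by
  set n : Pt := (a.2 - b.2, b.1 - a.1)
  have hray : Tendsto (fun t : ℝ => x + t • n) (𝓝[>] 0) (𝓝 x) := by
    have : Continuous fun t : ℝ => x + t • n := by fun_prop
    simpa using (this.tendsto 0).mono_left nhdsWithin_le_nhds
  refine hray.frequently (Eventually.frequently ?_)
  filter_upwards [hray.eventually hs, self_mem_nhdsWithin] with t hts ht
  exact ⟨hts, cross_lt_cross_add_smul hab x ht⟩

lemma segment_subset_frontier_convexHull {p : Finset Pt} {a b : Pt} (ha : a ∈ p) (hb : b ∈ p)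
    (hab : a ≠ b) (hright : ∀ v ∈ p, cross a b v ≤ 0) :
    segment ℝ a b ⊆ frontier (convexHull ℝ (p : Set Pt)) := by
  intro x hx
  rw [(p.finite_toSet.isClosed_convexHull ℝ).frontier_eq]
  refine ⟨segment_subset_convexHull ha hb hx, fun hint => ?_⟩
  have hx0 : cross a b x = 0 := by
    obtain ⟨s, t, -, -, hst, rfl⟩ := hx
    simp [cross_combo a b a b hst]
  obtain ⟨y, hy, hlt⟩ := (frequently_mem_and_cross_lt hab (isOpen_interior.mem_nhds hint)).exists
  have := cross_le_of_mem_convexHull hright (interior_subset hy)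
  linarith

lemma isEdgeOf_of_forall_cross_nonpos {p : Finset Pt} {a b : Pt} (ha : a ∈ p) (hb : b ∈ p)
    (hab : a ≠ b) (hright : ∀ v ∈ p, cross a b v ≤ 0) : IsEdgeOf p a b :=
  ⟨ha, hb, hab, segment_subset_frontier_convexHull ha hb hab hright⟩

lemma IsEdgeOf.symm {p : Finset Pt} {a b : Pt} (h : IsEdgeOf p a b) : IsEdgeOf p b a :=
  ⟨h.2.1, h.1, h.2.2.1.symm, segment_symm ℝ a b ▸ h.2.2.2⟩

/-- A consequence of the Krein–Milman theorem. -/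
lemma mem_convexHull_erase_of_notMem_extremePoints {E : Type*} [NormedAddCommGroup E]
    [NormedSpace ℝ E] [DecidableEq E] {s : Finset E} {x : E} (hx : x ∈ s)
    (hext : x ∉ (convexHull ℝ (s : Set E)).extremePoints ℝ) :
    x ∈ convexHull ℝ ((s.erase x : Finset E) : Set E) := by
  have hsub : (convexHull ℝ (s : Set E)).extremePoints ℝ ⊆ ((s.erase x : Finset E) : Set E) :=
    fun y hy => Finset.mem_erase.2 ⟨fun h => hext (h ▸ hy), extremePoints_convexHull_subset hy⟩
  have hx' := subset_convexHull ℝ (s : Set E) hx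
  rw [← closure_convexHull_extremePoints (s.finite_toSet.isCompact_convexHull ℝ)
    (convex_convexHull ℝ _)] at hx'
  exact closure_minimal (convexHull_mono hsub) ((s.erase x).finite_toSet.isClosed_convexHull ℝ) hx'

lemma notMem_convexHull_erase_of_mem_extremePoints {E : Type*} [AddCommGroup E] [Module ℝ E]
    [DecidableEq E] {s : Finset E} {x : E} (hext : x ∈ (convexHull ℝ (s : Set E)).extremePoints ℝ) :
    x ∉ convexHull ℝ ((s.erase x : Finset E) : Set E) := by
  rw [(convex_convexHull ℝ _).mem_extremePoints_iff_mem_sdiff_convexHull_sdiff] at hext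
  refine fun hx => hext.2 (convexHull_mono ?_ hx)
  rw [Finset.coe_erase]
  exact Set.sdiff_subset_sdiff_left (subset_convexHull ℝ _)

lemma GenPos.mem_interior_convexHull {P q : Finset Pt} (hgp : GenPos P) (hq : q ⊆ P) {x : Pt}
    (hx : x ∈ P) (hxq : x ∉ q) (hmem : x ∈ convexHull ℝ (q : Set Pt)) :
    x ∈ interior (convexHull ℝ (q : Set Pt)) := by
  obtain ⟨ι, _, z, w, hzq, hz, hw, hw1, hwz⟩ := eq_pos_convex_span_of_mem_convexHull hmem
  have hcard : Fintype.card ι ≤ 3 :=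
    hz.card_le_finrank_succ.trans
      (Nat.add_le_add_right (by simpa using Submodule.finrank_le (vectorSpan ℝ (range z))) 1)
  have hzP : ∀ k, z k ∈ P := fun k => hq (hzq ⟨k, rfl⟩)
  have hzx : ∀ k, z k ≠ x := fun k h => hxq (h ▸ hzq ⟨k, rfl⟩)
  interval_cases h : Fintype.card ι
  · simp [Fintype.card_eq_zero_iff.1 h] at hw1
  · obtain ⟨a, huniv⟩ := Finset.card_eq_one.1 (Finset.card_univ.trans h)
    simp only [huniv, Finset.sum_singleton] at hw1 hwz
    exact absurd (by simpa [hw1] using hwz) (hzx a)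
  · obtain ⟨a, b, hab, huniv⟩ := Finset.card_eq_two.1 (Finset.card_univ.trans h)
    rw [huniv, Finset.sum_pair hab] at hw1 hwz
    refine absurd ?_ (hgp _ (hzP a) _ (hzP b) _ hx (hz.injective.ne hab) (hzx b) (hzx a))
    rw [← hwz, cross_combo _ _ _ _ hw1]
    simp
  · let B : AffineBasis ι ℝ Pt :=
      ⟨z, hz, hz.affineSpan_eq_top_iff_card_eq_finrank_add_one.2 (by simp [h])⟩
    refine interior_mono (convexHull_mono hzq) ?_
    change x ∈ interior (convexHull ℝ (Set.range B))
    rw [B.interior_convexHull]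
    intro k
    rw [← hwz, ← Finset.affineCombination_eq_linear_combination _ _ _ hw1]
    exact (hw k).trans_eq (B.coord_apply_combination_of_mem (Finset.mem_univ k) hw1).symm

lemma GenPos.convexHull_mem_nhds_of_notMem_extremePoints {P : Finset Pt} (hgp : GenPos P)
    {x : Pt} (hx : x ∈ P) (hext : x ∉ (convexHull ℝ (P : Set Pt)).extremePoints ℝ) :
    convexHull ℝ (P : Set Pt) ∈ 𝓝 x :=
  mem_interior_iff_mem_nhds.1 <| interior_mono (convexHull_mono (P.erase_subset x)) <|
    hgp.mem_interior_convexHull (P.erase_subset x) hx (P.notMem_erase x)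
      (mem_convexHull_erase_of_notMem_extremePoints hx hext)

/-- `t` is the slope `g(v - i) / φ(v - i)`, with `g` the functional `φ` rotated by a right angle;
the identity `‖n‖² · cross i w v = g(v - i) φ(w - i) - g(w - i) φ(v - i)`, where `n` represents `φ`,
turns comparison of slopes into orientation. -/
lemma exists_slope_cross_nonpos (φ : Pt →ₗ[ℝ] ℝ) (i : Pt) {S : Finset Pt}
    (hS : ∀ v ∈ S, 0 < φ (v - i)) :
    ∃ t : Pt → ℝ, ∀ v ∈ S, ∀ w ∈ S, t v ≤ t w → cross i w v ≤ 0 := by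
  set f₁ := φ (1, 0)
  set f₂ := φ (0, 1)
  have hφ : ∀ u : Pt, φ u = f₁ * u.1 + f₂ * u.2 := fun u => by
    have hu : u = u.1 • ((1 : ℝ), (0 : ℝ)) + u.2 • ((0 : ℝ), (1 : ℝ)) := by ext <;> simp
    rw [congrArg φ hu, map_add, map_smul, map_smul, smul_eq_mul, smul_eq_mul]
    ring
  let g : Pt → ℝ := fun u => f₁ * u.2 - f₂ * u.1
  refine ⟨fun v => g (v - i) / φ (v - i), fun v hv w hw hvw => ?_⟩
  have hv' := hS v hv
  have hw' := hS w hw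
  rw [div_le_div_iff₀ hv' hw'] at hvw
  have hid :
      (f₁ ^ 2 + f₂ ^ 2) * cross i w v = g (v - i) * φ (w - i) - g (w - i) * φ (v - i) := by
    simp only [hφ, g, cross, Prod.fst_sub, Prod.snd_sub]; ring
  have hn : 0 < f₁ ^ 2 + f₂ ^ 2 := by
    rw [hφ] at hv'
    by_contra! h
    have h₁ : f₁ = 0 := by nlinarith
    have h₂ : f₂ = 0 := by nlinarith
    simp [h₁, h₂] at hv'
  nlinarith

lemma exists_edges_of_mem_extremePoints {p : Finset Pt} {i : Pt} (hi : i ∈ p)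
    (hext : i ∈ (convexHull ℝ (p : Set Pt)).extremePoints ℝ) (hne : (p.erase i).Nonempty) :
    ∃ k ∈ p.erase i, ∃ l ∈ p.erase i, (∀ v ∈ p, cross i k v ≤ 0) ∧ ∀ v ∈ p, cross l i v ≤ 0 := by
  obtain ⟨φ, c, hφi, hφS⟩ := geometric_hahn_banach_point_closed (convex_convexHull ℝ _)
    ((p.erase i).finite_toSet.isClosed_convexHull ℝ)
    (notMem_convexHull_erase_of_mem_extremePoints hext)
  obtain ⟨t, ht⟩ := exists_slope_cross_nonpos (φ : Pt →L[ℝ] ℝ) i (S := p.erase i) fun v hv => by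
    have := hφS v (subset_convexHull ℝ _ hv)
    simp only [ContinuousLinearMap.coe_coe, map_sub]
    linarith
  obtain ⟨k, hk, hkmax⟩ := (p.erase i).exists_max_image t hne
  obtain ⟨l, hl, hlmin⟩ := (p.erase i).exists_min_image t hne
  refine ⟨k, hk, l, hl, fun v hv => ?_, fun v hv => ?_⟩
  · rcases eq_or_ne v i with rfl | hvi
    · simp
    · have hv' := Finset.mem_erase.2 ⟨hvi, hv⟩
      exact ht v hv' k hk (hkmax v hv')
  · rw [cross_rotate]
    rcases eq_or_ne v i with rfl | hvi
    · simp
    · have hv' := Finset.mem_erase.2 ⟨hvi, hv⟩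
      exact ht l hl v hv' (hlmin v hv')

lemma exists_mem_convexHull_and_cross_lt {U : Finset (Finset Pt)} {x a b : Pt} (hab : a ≠ b)
    (hU : (⋃ p ∈ U, convexHull ℝ (p : Set Pt)) ∈ 𝓝 x) :
    ∃ p ∈ U, x ∈ convexHull ℝ (p : Set Pt) ∧ ∃ v ∈ p, cross a b x < cross a b v := by
  have hfreq : ∃ᶠ y in 𝓝 x, ∃ p ∈ U, y ∈ convexHull ℝ (p : Set Pt) ∧ cross a b x < cross a b y :=
    (frequently_mem_and_cross_lt hab hU).mono fun y ⟨hy, hlt⟩ => by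
      obtain ⟨p, hp, hyp⟩ := Set.mem_iUnion₂.1 hy
      exact ⟨p, hp, hyp, hlt⟩
  obtain ⟨p, hp, hpfreq⟩ := U.frequently_exists.1 hfreq
  refine ⟨p, hp, (p.finite_toSet.isClosed_convexHull ℝ).mem_of_frequently_of_tendsto
    (hpfreq.mono fun _ h => h.1) tendsto_id, ?_⟩
  obtain ⟨y, hy, hlt⟩ := hpfreq.exists
  by_contra! h
  exact (cross_le_of_mem_convexHull h hy).not_gt hlt

lemma cross_nonneg_or_cross_nonneg_of_wedge {i j k l v : Pt} (hv : 0 < cross i j v)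
    (hkv : cross i k v < 0) (hlv : cross l i v ≤ 0) (hkl : cross i k l ≤ 0) :
    0 ≤ cross i j k ∨ 0 ≤ cross i j l := by
  by_contra! h
  have hplucker :
      cross i j l * cross i k v = cross i j v * cross i k l - cross i j k * cross l i v := by
    simp only [cross]; ring
  nlinarith [mul_pos_of_neg_of_neg h.2 hkv, mul_nonpos_of_nonneg_of_nonpos hv.le hkl,
    mul_nonneg_of_nonpos_of_nonpos h.1.le hlv]

theorem stmt_8_general (P : Finset Pt) (hgp : GenPos P) (U : Finset (Finset Pt))
    (hU : IsConvexPartition P U)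
    (i : Pt) (hi : i ∈ P)
    (hint : i ∉ Set.extremePoints ℝ (convexHull ℝ (P : Set Pt)))
    (j : Pt) (hij : j ≠ i) :
    ∃ k : Pt, (∃ p ∈ U, IsEdgeOf p i k) ∧ 0 ≤ cross i j k := by
  obtain ⟨hpoly, -, hcover⟩ := hU
  obtain ⟨p, hpU, hip, v, hvp, hv⟩ := exists_mem_convexHull_and_cross_lt hij.symm
    (hcover ▸ hgp.convexHull_mem_nhds_of_notMem_extremePoints hi hint)
  rw [cross_self_outer] at hv
  obtain ⟨hpP, hcard, hext, hempty⟩ := hpoly p hpU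
  replace hip : i ∈ p := by
    by_contra h
    exact hempty i hi (hgp.mem_interior_convexHull hpP hi h hip)
  obtain ⟨k, hk, l, hl, hkp, hlp⟩ := exists_edges_of_mem_extremePoints hip (hext i hip)
    (Finset.card_pos.1 (by rw [Finset.card_erase_of_mem hip]; omega))
  obtain ⟨hki, hkp'⟩ := Finset.mem_erase.1 hk
  obtain ⟨hli, hlp'⟩ := Finset.mem_erase.1 hl
  have hik : IsEdgeOf p i k := isEdgeOf_of_forall_cross_nonpos hip hkp' hki.symm hkp
  have hil : IsEdgeOf p i l := (isEdgeOf_of_forall_cross_nonpos hlp' hip hli hlp).symm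
  rcases eq_or_ne v k with rfl | hvk
  · exact ⟨v, ⟨p, hpU, hik⟩, hv.le⟩
  have hvi : v ≠ i := by rintro rfl; simp at hv
  have hkv : cross i k v < 0 :=
    (hkp v hvp).lt_of_ne <| hgp i hi k (hpP hkp') v (hpP hvp) hki.symm hvk.symm hvi.symm
  rcases cross_nonneg_or_cross_nonneg_of_wedge hv hkv (hlp v hvp) (hkp l hlp') with h | h
  exacts [⟨k, ⟨p, hpU, hik⟩, h⟩, ⟨l, ⟨p, hpU, hil⟩, h⟩]

/-- for an interior point `i` of a convex partition and any other point
`j` of `P`, some edge `{i,k}` of the partition has `k` on or to the left of the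
oriented line from `i` through `j`. -/
theorem stmt_8 (P : Finset Pt) (hgp : GenPos P) (U : Finset (Finset Pt))
    (hU : IsConvexPartition P U) (hvert : ∀ x ∈ P, ∃ p ∈ U, x ∈ p)
    (i : Pt) (hi : i ∈ P)
    (hint : i ∉ Set.extremePoints ℝ (convexHull ℝ (P : Set Pt)))
    (j : Pt) (hj : j ∈ P) (hij : j ≠ i) :
    ∃ k : Pt, (∃ p ∈ U, IsEdgeOf p i k) ∧ 0 ≤ cross i j k :=
  stmt_8_general P hgp U hU i hi hint j hij
end

section
/- Let f ∈ ℝᴾ be a face of the arrangement of a point set P in general position, and p an empty convex polygon with vertices in P. If the interior of f intersects the interior of p, then f ⊆ p (faces of the arrangement are atomic with respect to empty convex polygons on P). -/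
open Set

attribute [local instance] Classical.propDecidable

open Module

/-! The boundary of a convex polygon with vertices in `P` is covered by segments between
points of `P`: a boundary point of the hull is a positive convex combination of affinely
independent vertices that do not form an affine basis of the plane, hence of at most two.
A face is connected and avoids all these segments, so it cannot cross the boundary of `p`;
meeting the interior, it lies in it, and its closure lies in `p`. -/

section ConvexHullFrontier

variable {E : Type*} [NormedAddCommGroup E] [NormedSpace ℝ E] [FiniteDimensional ℝ E]

theorem exists_finset_card_le_finrank_of_mem_convexHull_of_notMem_interior {s : Set E} {x : E}
    (hx : x ∈ convexHull ℝ s) (hnx : x ∉ interior (convexHull ℝ s)) :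
    ∃ t : Finset E, ↑t ⊆ s ∧ t.card ≤ finrank ℝ E ∧ x ∈ convexHull ℝ (t : Set E) := by
  obtain ⟨ι, _, z, w, hzs, hind, hw, hw1, rfl⟩ := eq_pos_convex_span_of_mem_convexHull hx
  have hcard_le : Fintype.card ι ≤ finrank ℝ E + 1 :=
    hind.card_le_finrank_succ.trans (Nat.succ_le_succ (Submodule.finrank_le _))
  have hcard_ne : Fintype.card ι ≠ finrank ℝ E + 1 := by
    intro hcard
    let b : AffineBasis ι ℝ E :=
      ⟨z, hind, hind.affineSpan_eq_top_iff_card_eq_finrank_add_one.mpr hcard⟩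
    refine hnx (interior_mono (convexHull_mono hzs) ?_)
    change _ ∈ interior (convexHull ℝ (range b))
    rw [b.interior_convexHull]
    intro i
    rw [← Finset.univ.affineCombination_eq_linear_combination z w hw1]
    exact (b.coord_apply_combination_of_mem (Finset.mem_univ i) hw1).symm ▸ hw i
  refine ⟨Finset.univ.image z, by simpa using hzs, Finset.card_image_le.trans (by rw [Finset.card_univ]; omega), ?_⟩
  exact (convex_convexHull ℝ _).sum_mem (fun i _ => (hw i).le) hw1
    fun i _ => subset_convexHull ℝ _ (by simp)

theorem Set.Finite.frontier_convexHull_subset_biUnion_segment (hE : finrank ℝ E = 2)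
    {s : Set E} (hs : s.Finite) :
    frontier (convexHull ℝ s) ⊆ ⋃ a ∈ s, ⋃ b ∈ s, segment ℝ a b := by
  intro x hx
  have hx_mem : x ∈ convexHull ℝ s := (hs.isClosed_convexHull ℝ).frontier_subset hx
  obtain ⟨t, hts, ht_card, hxt⟩ :=
    exists_finset_card_le_finrank_of_mem_convexHull_of_notMem_interior hx_mem hx.2
  have ht_cases : t.card = 0 ∨ t.card = 1 ∨ t.card = 2 := by omega
  rcases ht_cases with h0 | h1 | h2
  · simp [Finset.card_eq_zero.mp h0] at hxt
  · obtain ⟨a, rfl⟩ := Finset.card_eq_one.mp h1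
    have ha : a ∈ s := hts (Finset.mem_singleton_self a)
    rw [Finset.coe_singleton, convexHull_singleton, mem_singleton_iff] at hxt
    exact mem_biUnion ha (mem_biUnion ha (hxt ▸ left_mem_segment ℝ a a))
  · obtain ⟨a, b, -, rfl⟩ := Finset.card_eq_two.mp h2
    rw [Finset.coe_pair, convexHull_pair] at hxt
    rw [Finset.coe_pair, insert_subset_iff, singleton_subset_iff] at hts
    exact mem_biUnion hts.1 (mem_biUnion hts.2 hxt)

end ConvexHullFrontier

theorem IsPreconnected.subset_interior_of_disjoint_frontier {X : Type*} [TopologicalSpace X]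
    {s t : Set X} (hs : IsPreconnected s) (hst : Disjoint s (frontier t))
    (hmeet : (s ∩ interior t).Nonempty) : s ⊆ interior t := by
  refine hs.subset_left_of_subset_union isOpen_interior isClosed_closure.isOpen_compl
    (disjoint_compl_right.mono_left interior_subset_closure) (fun y hy => ?_) hmeet
  by_cases hy_closure : y ∈ closure t
  · exact .inl (not_not.mp fun hy_int => disjoint_left.mp hst hy ⟨hy_closure, hy_int⟩)
  · exact .inr hy_closure

theorem stmt_12_general (P : Finset Pt) (F : Set Pt)
    (hF : IsBoundedFace P F) (p : Finset Pt) (hp : IsEmptyPolygon P p)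
    (hmeet : (F ∩ interior (convexHull ℝ (p : Set Pt))).Nonempty) :
    closure F ⊆ convexHull ℝ (p : Set Pt) := by
  obtain ⟨⟨x₀, -, rfl⟩, -⟩ := hF
  set K := convexHull ℝ (p : Set Pt)
  have hK_closed : IsClosed K := p.finite_toSet.isClosed_convexHull ℝ
  have hfrontier : frontier K ⊆ arrUnion P :=
    (p.finite_toSet.frontier_convexHull_subset_biUnion_segment (by simp)).trans
      (biUnion_mono hp.1 fun _ _ => biUnion_subset_biUnion_left hp.1)
  have hF_int : connectedComponentIn (arrUnion P)ᶜ x₀ ⊆ interior K :=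
    isPreconnected_connectedComponentIn.subset_interior_of_disjoint_frontier
      ((disjoint_compl_left_iff_subset.mpr hfrontier).mono_left
        (connectedComponentIn_subset _ _)) hmeet
  exact (closure_mono hF_int).trans hK_closed.closure_interior_subset

/-- faces of the arrangement are atomic — if the (open) face `F` meets
the interior of an empty convex polygon `p`, then the closure of `F` lies inside `p`. -/
theorem stmt_12 (P : Finset Pt) (hgp : GenPos P) (F : Set Pt)
    (hF : IsBoundedFace P F) (p : Finset Pt) (hp : IsEmptyPolygon P p)
    (hmeet : (F ∩ interior (convexHull ℝ (p : Set Pt))).Nonempty) :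
    closure F ⊆ convexHull ℝ (p : Set Pt) :=
  stmt_12_general P F hF p hp hmeet
end

section
/- For the set-partition linear program min ∑_p u_p subject to ∑_{p ⊇ f} u_p = 1 for all faces f and u ≥ 0, with all objective coefficients equal to 1: if z is the optimal value of a restricted master problem and c̄ ≤ 0 is the minimum reduced cost over all columns, then z / (1 − c̄) is a lower bound on the optimal value of the full linear program. -/
/-! Weak duality with a scaled dual: if every column satisfies `αᵀA_p ≤ 1 - c̄`, then for every
feasible `u` we get `1ᵀα = αᵀ(Au) = (αᵀA)u ≤ (1 - c̄)·1ᵀu`, and `1 - c̄ ≥ 1 > 0` lets us divide. -/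

open Matrix

theorem dotProduct_le_mul_sum_of_vecMul_le {ι F : Type*} [Fintype ι] [Fintype F]
    (A : Matrix F ι ℝ) (α b : F → ℝ) (u : ι → ℝ) (c : ℝ)
    (hu : ∀ p, 0 ≤ u p) (hfeas : A *ᵥ u = b) (hcol : ∀ p, (α ᵥ* A) p ≤ c) :
    α ⬝ᵥ b ≤ c * ∑ p, u p :=
  calc α ⬝ᵥ b = (α ᵥ* A) ⬝ᵥ u := by rw [← hfeas, dotProduct_mulVec]
    _ = ∑ p, (α ᵥ* A) p * u p := rfl
    _ ≤ ∑ p, c * u p := Finset.sum_le_sum fun p _ => mul_le_mul_of_nonneg_right (hcol p) (hu p)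
    _ = c * ∑ p, u p := (Finset.mul_sum _ _ _).symm

theorem stmt_13_general {ι F : Type*} [Fintype ι] [Fintype F]
    (A : F → ι → ℝ)
    (α : F → ℝ) (cbar : ℝ)
    (hmin : ∀ p : ι, cbar ≤ 1 - ∑ f : F, α f * A f p)
    (hneg : cbar ≤ 0)
    (u : ι → ℝ) (hu : ∀ p, 0 ≤ u p)
    (hfeas : ∀ f : F, ∑ p : ι, A f p * u p = 1) :
    (∑ f : F, α f) / (1 - cbar) ≤ ∑ p : ι, u p := by
  have hbound : α ⬝ᵥ (fun _ => 1) ≤ (1 - cbar) * ∑ p, u p :=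
    dotProduct_le_mul_sum_of_vecMul_le A α _ u (1 - cbar) hu (funext hfeas)
      fun p => show ∑ f, α f * A f p ≤ 1 - cbar by linarith [hmin p]
  rw [div_le_iff₀ (by linarith), mul_comm]
  simpa [dotProduct] using hbound

/-- Farley/Lübbecke bound for unit costs: for the set-partition LP
min 1ᵀu s.t. Au = 1, u ≥ 0, with A a 0-1 matrix, dual vector α of the restricted
master with objective value z = 1ᵀα, and minimum reduced cost c̄ ≤ 0, every feasible
u of the full LP satisfies 1ᵀu ≥ z / (1 - c̄). -/
theorem stmt_13 {ι F : Type*} [Fintype ι] [Fintype F]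
    (A : F → ι → ℝ) (hA : ∀ f p, A f p = 0 ∨ A f p = 1)
    (α : F → ℝ) (cbar : ℝ)
    (hmin : ∀ p : ι, cbar ≤ 1 - ∑ f : F, α f * A f p)
    (hneg : cbar ≤ 0)
    (u : ι → ℝ) (hu : ∀ p, 0 ≤ u p)
    (hfeas : ∀ f : F, ∑ p : ι, A f p * u p = 1) :
    (∑ f : F, α f) / (1 - cbar) ≤ ∑ p : ι, u p :=
  stmt_13_general A α cbar hmin hneg u hu hfeas
end
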